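/- arXiv:1911.03690 — 5 statements merged into one kernel-verified Lean document; each statement's English description precedes it below -/
import Mathlib

section
/- Let d ≥ 0 be an integer, t ≥ 0, and set Ψ(t,y) = y²/(8(1+t)). If u : ℝ^d × [0,∞) → ℝ is smooth and decays sufficiently fast as y → +∞ (so that y u² e^{y²/(4(1+t))} → 0 and all integrals below are finite), then ∫_{ℝ^d×ℝ₊} |∂_y u(X,y)|² e^{2Ψ(t,y)} dX dy ≥ (1/(2(1+t))) ∫_{ℝ^d×ℝ₊} |u(X,y)|² e^{2Ψ(t,y)} dX dy. No boundary condition at y = 0 is required. -/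
open MeasureTheory Filter

lemma oneDim (t : ℝ) (ht : 0 ≤ t) (v : ℝ → ℝ) (hv : ContDiff ℝ (⊤ : ℕ∞) v)
    (h1 : Integrable (fun y => (v y)^2 * Real.exp (y^2/(4*(1+t))))
      ((volume : Measure ℝ).restrict (Set.Ioi 0)))
    (h2 : Integrable (fun y => (deriv v y)^2 * Real.exp (y^2/(4*(1+t))))
      ((volume : Measure ℝ).restrict (Set.Ioi 0)))
    (hd : Tendsto (fun y => y * (v y)^2 * Real.exp (y^2/(4*(1+t)))) atTop (nhds 0)) :
    (1/(2*(1+t))) * ∫ y, (v y)^2 * Real.exp (y^2/(4*(1+t)))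
        ∂((volume : Measure ℝ).restrict (Set.Ioi 0))
      ≤ ∫ y, (deriv v y)^2 * Real.exp (y^2/(4*(1+t)))
        ∂((volume : Measure ℝ).restrict (Set.Ioi 0)) := by
  have h1t : (0:ℝ) < 1 + t := by linarith
  set c : ℝ := 1/(2*(1+t)) with hc_def
  have hc : 0 < c := by positivity
  set w : ℝ → ℝ := fun y => Real.exp (y^2/(4*(1+t))) with hw_def
  have hwpos : ∀ y, 0 < w y := fun y => Real.exp_pos _
  have hvc : Continuous v := hv.continuous
  have hv'c : Continuous (deriv v) := hv.continuous_deriv (by simp)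
  have hwc : Continuous w := by continuity
  set g : ℝ → ℝ := fun y => y * (v y)^2 * w y with hg_def
  set g' : ℝ → ℝ := fun y =>
    (v y)^2 * w y + 2*y*(v y)*(deriv v y)*(w y) + c*y^2*(v y)^2*(w y) with hg'_def
  have hgderiv : ∀ y, HasDerivAt g (g' y) y := by
    intro y
    have hw' : HasDerivAt w (c * y * w y) y := by
      have h0 : HasDerivAt (fun y : ℝ => y^2/(4*(1+t))) (2*y/(4*(1+t))) y := by
        simpa using (hasDerivAt_pow 2 y).div_const (4*(1+t))
      have := h0.exp
      convert this using 1
      rw [hc_def]; simp only [hw_def]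
      field_simp
      ring
    have hvy : HasDerivAt v (deriv v y) y := (hv.differentiable (by simp) y).hasDerivAt
    have h1' : HasDerivAt (fun y => y * (v y)^2)
        (1 * (v y)^2 + y * (2 * v y ^ 1 * deriv v y)) y :=
      (hasDerivAt_id y).mul (hvy.pow 2)
    have : HasDerivAt (fun y => y * (v y)^2 * w y)
        ((1 * v y ^ 2 + y * (2 * v y ^ 1 * deriv v y)) * w y + y * v y ^ 2 * (c * y * w y)) y :=
      h1'.mul hw'
    convert this using 1
    simp only [hg'_def]
    ring
  have hg'cont : Continuous g' := by
    apply Continuous.add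
    apply Continuous.add
    · exact (hvc.pow 2).mul hwc
    · fun_prop
    · fun_prop
  -- key bound for all R ≥ 0
  have key : ∀ R : ℝ, 0 ≤ R →
      ∫ y in (0:ℝ)..R, (v y)^2 * w y ≤ g R + (1/c) * ∫ y, (deriv v y)^2 * w y
        ∂((volume : Measure ℝ).restrict (Set.Ioi 0)) := by
    intro R hR
    have hFTC : ∫ y in (0:ℝ)..R, g' y = g R - g 0 :=
      intervalIntegral.integral_eq_sub_of_hasDerivAt (fun x _ => hgderiv x)
        (hg'cont.intervalIntegrable 0 R)
    have hg0 : g 0 = 0 := by simp [hg_def]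
    have hpt : ∀ y, (v y)^2 * w y - (1/c) * ((deriv v y)^2 * w y) ≤ g' y := by
      intro y
      have hsq : 0 ≤ (c * y * v y + deriv v y)^2 * w y :=
        mul_nonneg (sq_nonneg _) (hwpos y).le
      have hw0 := (hwpos y).le
      have hinv : c * (1/c) = 1 := mul_one_div_cancel (ne_of_gt hc)
      simp only [hg'_def]
      nlinarith [hsq, hinv, hc, hw0, mul_nonneg (sq_nonneg (deriv v y)) hw0]
    have hmono : ∫ y in (0:ℝ)..R, (v y)^2 * w y
        ≤ ∫ y in (0:ℝ)..R, (g' y + (1/c) * ((deriv v y)^2 * w y)) := by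
      apply intervalIntegral.integral_mono_on hR
      · exact ((hvc.pow 2).mul hwc).intervalIntegrable 0 R
      · exact (hg'cont.add (continuous_const.mul ((hv'c.pow 2).mul hwc))).intervalIntegrable 0 R
      · intro x _
        have := hpt x
        linarith
    have hsplit : ∫ y in (0:ℝ)..R, (g' y + (1/c) * ((deriv v y)^2 * w y))
        = (∫ y in (0:ℝ)..R, g' y) + (1/c) * ∫ y in (0:ℝ)..R, (deriv v y)^2 * w y := by
      rw [intervalIntegral.integral_add (hg'cont.intervalIntegrable 0 R)
        (by exact (continuous_const.mul ((hv'c.pow 2).mul hwc)).intervalIntegrable 0 R :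
          IntervalIntegrable (fun y => (1/c) * ((deriv v y)^2 * w y)) volume 0 R),
        intervalIntegral.integral_const_mul]
    have htail : ∫ y in (0:ℝ)..R, (deriv v y)^2 * w y
        ≤ ∫ y, (deriv v y)^2 * w y ∂((volume : Measure ℝ).restrict (Set.Ioi 0)) := by
      rw [intervalIntegral.integral_of_le hR]
      apply setIntegral_mono_set h2
      · filter_upwards with y using mul_nonneg (sq_nonneg _) (hwpos y).le
      · filter_upwards with y hy using hy.1
    calc ∫ y in (0:ℝ)..R, (v y)^2 * w y
        ≤ (∫ y in (0:ℝ)..R, g' y) + (1/c) * ∫ y in (0:ℝ)..R, (deriv v y)^2 * w y := by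
          rw [← hsplit]; exact hmono
      _ ≤ g R + (1/c) * ∫ y, (deriv v y)^2 * w y
            ∂((volume : Measure ℝ).restrict (Set.Ioi 0)) := by
          rw [hFTC, hg0, sub_zero]
          exact add_le_add_right (mul_le_mul_of_nonneg_left htail (by positivity)) _
  -- pass to the limit
  set D : ℝ := ∫ y, (deriv v y)^2 * w y ∂((volume : Measure ℝ).restrict (Set.Ioi 0)) with hD
  set A : ℝ := ∫ y, (v y)^2 * w y ∂((volume : Measure ℝ).restrict (Set.Ioi 0)) with hA
  have hAlim : Tendsto (fun R => ∫ y in (0:ℝ)..R, (v y)^2 * w y) atTop (nhds A) :=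
    intervalIntegral_tendsto_integral_Ioi 0 h1 tendsto_id
  have hBlim : Tendsto (fun R => g R + (1/c) * D) atTop (nhds (0 + (1/c) * D)) :=
    hd.add tendsto_const_nhds
  have hAle : A ≤ (1/c) * D := by
    have := le_of_tendsto_of_tendsto hAlim hBlim
      ((eventually_ge_atTop (0:ℝ)).mono fun R hR => key R hR)
    linarith
  have : c * A ≤ c * ((1/c) * D) := mul_le_mul_of_nonneg_left hAle hc.le
  calc c * A ≤ c * ((1/c) * D) := this
    _ = D := by field_simp

/-- Treves/Poincaré-type weighted inequality: no boundary condition at `y = 0` needed. -/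
theorem treves_weighted_poincare
    (d : ℕ) (t : ℝ) (ht : 0 ≤ t)
    (u : (Fin d → ℝ) → ℝ → ℝ)
    (hu : ContDiff ℝ (⊤ : ℕ∞) (fun p : (Fin d → ℝ) × ℝ => u p.1 p.2))
    (hint1 : Integrable
      (fun p : (Fin d → ℝ) × ℝ => (u p.1 p.2)^2 * Real.exp (p.2^2 / (4*(1+t))))
      ((volume : Measure (Fin d → ℝ)).prod ((volume : Measure ℝ).restrict (Set.Ioi 0))))
    (hint2 : Integrable
      (fun p : (Fin d → ℝ) × ℝ => (deriv (u p.1) p.2)^2 * Real.exp (p.2^2 / (4*(1+t))))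
      ((volume : Measure (Fin d → ℝ)).prod ((volume : Measure ℝ).restrict (Set.Ioi 0))))
    (hdecay : ∀ X : Fin d → ℝ,
      Tendsto (fun y => y * (u X y)^2 * Real.exp (y^2 / (4*(1+t)))) atTop (nhds 0)) :
    (1 / (2*(1+t))) *
      ∫ p, (u p.1 p.2)^2 * Real.exp (p.2^2 / (4*(1+t)))
        ∂((volume : Measure (Fin d → ℝ)).prod ((volume : Measure ℝ).restrict (Set.Ioi 0)))
    ≤ ∫ p, (deriv (u p.1) p.2)^2 * Real.exp (p.2^2 / (4*(1+t)))
        ∂((volume : Measure (Fin d → ℝ)).prod ((volume : Measure ℝ).restrict (Set.Ioi 0))) := by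
  rw [integral_prod _ hint1, integral_prod _ hint2, ← integral_const_mul]
  apply integral_mono_ae
  · exact hint1.integral_prod_left.const_mul _
  · exact hint2.integral_prod_left
  · filter_upwards [hint1.prod_right_ae, hint2.prod_right_ae] with X h1 h2
    exact oneDim t ht (u X)
      (hu.comp (contDiff_const.prodMk contDiff_id)) h1 h2 (hdecay X)
end

section
/- Let t ≥ 0, Ψ(t,y) = y²/(8(1+t)), and let G : [0,∞) → ℝ be smooth with lim_{y→∞} G(y) = 0 and e^Ψ ∂_y G ∈ L²(0,∞). Then for every γ ∈ (0,1) there is a constant C (depending only on γ) such that for all y ≥ 0: |G(y)| ≤ C (1+t)^{1/4} e^{-((1+γ)/2)Ψ(t,y)} ‖e^{Ψ(t,·)} ∂_y G‖_{L²(0,∞)}. -/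
open MeasureTheory Filter Set

/-- Pointwise Gaussian-weighted bound of `G` by the weighted `L²` norm of `∂_y G`. -/
theorem pointwise_weighted_bound (γ : ℝ) (hγ : γ ∈ Set.Ioo (0:ℝ) 1) :
    ∃ C : ℝ, 0 < C ∧ ∀ t : ℝ, 0 ≤ t → ∀ G : ℝ → ℝ,
      ContDiff ℝ (⊤ : ℕ∞) G →
      Tendsto G atTop (nhds 0) →
      Integrable (fun y' => (Real.exp ((y')^2 / (8*(1+t))) * deriv G y')^2)
        ((volume : Measure ℝ).restrict (Set.Ioi 0)) →
      ∀ y : ℝ, 0 ≤ y →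
        |G y| ≤ C * (1+t) ^ ((1:ℝ)/4) *
          Real.exp (-(((1+γ)/2) * (y^2 / (8*(1+t))))) *
          Real.sqrt (∫ y' in Set.Ioi (0:ℝ),
            (Real.exp ((y')^2 / (8*(1+t))) * deriv G y')^2) := by
  obtain ⟨hγ0, hγ1⟩ := hγ
  have h1γ : (0:ℝ) < 1 - γ := by linarith
  refine ⟨Real.sqrt (Real.sqrt (8 * Real.pi / (1 - γ))), ?_, ?_⟩
  · exact Real.sqrt_pos.2 (Real.sqrt_pos.2 (div_pos (by positivity) h1γ))
  intro t ht G hG hGlim hInt y hy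
  set s : ℝ := 8*(1+t) with hs_def
  have hs : 0 < s := by positivity
  set f : ℝ → ℝ := fun y' => Real.exp ((y')^2 / s) * deriv G y' with hf_def
  set g : ℝ → ℝ := fun y' => Real.exp (-((y')^2 / s)) with hg_def
  have hInt' : Integrable (fun y' => f y' ^ 2) (volume.restrict (Set.Ioi 0)) := hInt
  have hdG : Continuous (deriv G) := hG.continuous_deriv (by simp)
  have hf_cont : Continuous f :=
    (Real.continuous_exp.comp ((continuous_pow 2).div_const s)).mul hdG
  have hg_cont : Continuous g :=
    Real.continuous_exp.comp (((continuous_pow 2).div_const s).neg)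
  have hfm2 : MemLp f 2 (volume.restrict (Set.Ioi 0)) :=
    (memLp_two_iff_integrable_sq hf_cont.aestronglyMeasurable).2 hInt'
  have hsub : volume.restrict (Set.Ioi y) ≤ volume.restrict (Set.Ioi (0:ℝ)) :=
    Measure.restrict_mono (Set.Ioi_subset_Ioi hy) le_rfl
  have hfm2' : MemLp f 2 (volume.restrict (Set.Ioi y)) := hfm2.mono_measure hsub
  have hg_sq_int' : Integrable (fun y' : ℝ => Real.exp (-(2/s) * y'^2)) volume :=
    integrable_exp_neg_mul_sq (by positivity)
  have hg_sq_eq : ∀ x : ℝ, g x ^ 2 = Real.exp (-(2/s) * x^2) := by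
    intro x
    rw [hg_def, ← Real.exp_nat_mul]
    congr 1
    push_cast
    ring
  have hg_sq_int : Integrable (fun y' => g y' ^ 2) (volume.restrict (Set.Ioi y)) := by
    refine (hg_sq_int'.restrict (s := Set.Ioi y)).congr ?_
    exact Eventually.of_forall fun x => (hg_sq_eq x).symm
  have hgm2 : MemLp g 2 (volume.restrict (Set.Ioi y)) :=
    (memLp_two_iff_integrable_sq hg_cont.aestronglyMeasurable).2 hg_sq_int
  have hgf_eq : ∀ x : ℝ, g x * f x = deriv G x := by
    intro x
    rw [hg_def, hf_def]
    simp only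
    rw [← mul_assoc, ← Real.exp_add, neg_add_cancel, Real.exp_zero, one_mul]
  have hderiv_int : IntegrableOn (deriv G) (Set.Ioi y) volume := by
    have h11 : (1:ENNReal)/1 = 1/2 + 1/2 := by
      rw [ENNReal.div_add_div_same, one_add_one_eq_two,
        ENNReal.div_self two_ne_zero ENNReal.ofNat_ne_top, one_div_one]
    have h1 : MemLp (g • f) 1 (volume.restrict (Set.Ioi y)) := hfm2'.smul hgm2
    exact (memLp_one_iff_integrable.1 h1).congr (Eventually.of_forall fun x => hgf_eq x)
  have hFTC : ∫ x in Set.Ioi y, deriv G x = 0 - G y :=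
    integral_Ioi_of_hasDerivAt_of_tendsto hG.continuous.continuousWithinAt
      (fun x _ => ((hG.differentiable (by simp)) x).hasDerivAt) hderiv_int hGlim
  have hGy : |G y| = |∫ x in Set.Ioi y, deriv G x| := by
    rw [hFTC, zero_sub, abs_neg]
  have hstep1 : |G y| ≤ ∫ x in Set.Ioi y, g x * |f x| := by
    rw [hGy, ← Real.norm_eq_abs]
    refine (norm_integral_le_integral_norm _).trans ?_
    refine le_of_eq (integral_congr_ae (Eventually.of_forall fun x => ?_))
    show ‖deriv G x‖ = g x * |f x|
    rw [Real.norm_eq_abs, ← hgf_eq x, abs_mul, abs_of_pos (Real.exp_pos _)]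
  have hpq : Real.HolderConjugate 2 2 := ⟨by norm_num, by norm_num, by norm_num⟩
  have hofReal : (ENNReal.ofReal 2) = 2 := by norm_num
  have hCS : ∫ x in Set.Ioi y, g x * |f x| ≤
      (∫ x in Set.Ioi y, g x ^ (2:ℝ)) ^ ((1:ℝ)/2) *
      (∫ x in Set.Ioi y, |f x| ^ (2:ℝ)) ^ ((1:ℝ)/2) := by
    refine integral_mul_le_Lp_mul_Lq_of_nonneg hpq
      (Eventually.of_forall fun x => (Real.exp_pos _).le)
      (Eventually.of_forall fun x => abs_nonneg _) ?_ ?_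
    · rw [hofReal]; exact hgm2
    · rw [hofReal]; exact hfm2'.norm
  have hint_g2 : (∫ x in Set.Ioi y, g x ^ (2:ℝ)) = ∫ x in Set.Ioi y, g x ^ 2 :=
    integral_congr_ae (Eventually.of_forall fun x => Real.rpow_two _)
  have hint_f2 : (∫ x in Set.Ioi y, |f x| ^ (2:ℝ)) = ∫ x in Set.Ioi y, f x ^ 2 := by
    refine integral_congr_ae (Eventually.of_forall fun x => ?_)
    show |f x| ^ (2:ℝ) = f x ^ 2
    rw [Real.rpow_two, sq_abs]
  have hg2_nonneg : 0 ≤ ∫ x in Set.Ioi y, g x ^ 2 :=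
    integral_nonneg fun x => sq_nonneg _
  have hf2_nonneg : 0 ≤ ∫ x in Set.Ioi y, f x ^ 2 :=
    integral_nonneg fun x => sq_nonneg _
  have hCS' : |G y| ≤ Real.sqrt (∫ x in Set.Ioi y, g x ^ 2) *
      Real.sqrt (∫ x in Set.Ioi y, f x ^ 2) := by
    refine hstep1.trans (hCS.trans (le_of_eq ?_))
    rw [hint_g2, hint_f2, Real.sqrt_eq_rpow, Real.sqrt_eq_rpow]
  have hf_mono : Real.sqrt (∫ x in Set.Ioi y, f x ^ 2) ≤
      Real.sqrt (∫ x in Set.Ioi (0:ℝ), f x ^ 2) := by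
    apply Real.sqrt_le_sqrt
    refine setIntegral_mono_set hInt' (Eventually.of_forall fun x => sq_nonneg _) ?_
    exact HasSubset.Subset.eventuallyLE (Set.Ioi_subset_Ioi hy)
  -- Gaussian tail estimate
  set K : ℝ := Real.exp (-((1+γ) * (y^2/s))) with hK_def
  set b : ℝ := (1-γ)/s with hb_def
  have hb : 0 < b := div_pos h1γ hs
  have hφ_int : Integrable (fun x : ℝ => K * Real.exp (-b * x^2)) volume :=
    (integrable_exp_neg_mul_sq hb).const_mul K
  have hpoint : ∀ x ∈ Set.Ioi y, g x ^ 2 ≤ K * Real.exp (-b * x^2) := by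
    intro x hx
    have hyx : y ≤ x := le_of_lt hx
    have hy2x2 : y^2 ≤ x^2 := by nlinarith
    rw [hg_sq_eq]
    have hsplit : Real.exp (-(2/s) * x^2) =
        Real.exp (-((1+γ) * (x^2/s))) * Real.exp (-b * x^2) := by
      rw [← Real.exp_add]
      congr 1
      rw [hb_def]
      field_simp
      ring
    rw [hsplit, hK_def]
    apply mul_le_mul_of_nonneg_right _ (Real.exp_pos _).le
    apply Real.exp_le_exp.2
    have hmono : (1+γ) * (y^2/s) ≤ (1+γ) * (x^2/s) := by gcongr <;> linarith
    linarith
  have htail : (∫ x in Set.Ioi y, g x ^ 2) ≤ K * Real.sqrt (Real.pi / b) := by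
    calc ∫ x in Set.Ioi y, g x ^ 2
        ≤ ∫ x in Set.Ioi y, K * Real.exp (-b * x^2) :=
          setIntegral_mono_on hg_sq_int hφ_int.integrableOn measurableSet_Ioi hpoint
      _ ≤ ∫ x : ℝ, K * Real.exp (-b * x^2) :=
          setIntegral_le_integral hφ_int (Eventually.of_forall fun x => by positivity)
      _ = K * ∫ x : ℝ, Real.exp (-b * x^2) := integral_const_mul K _
      _ = K * Real.sqrt (Real.pi / b) := by rw [integral_gaussian]
  have hsqrtK : Real.sqrt K = Real.exp (-(((1+γ)/2) * (y^2/s))) := by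
    rw [hK_def, ← Real.exp_half]
    congr 1
    ring
  have hquarter : Real.sqrt (Real.sqrt (1+t)) = (1+t) ^ ((1:ℝ)/4) := by
    rw [Real.sqrt_eq_rpow, Real.sqrt_eq_rpow,
      ← Real.rpow_mul (by linarith : (0:ℝ) ≤ 1+t)]
    norm_num
  have hπb : Real.pi / b = (8*Real.pi/(1-γ)) * (1+t) := by
    rw [hb_def, hs_def]
    field_simp
  have hsqrt_tail : Real.sqrt (∫ x in Set.Ioi y, g x ^ 2) ≤
      Real.sqrt (Real.sqrt (8*Real.pi/(1-γ))) * (1+t) ^ ((1:ℝ)/4) *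
      Real.exp (-(((1+γ)/2) * (y^2/s))) := by
    refine (Real.sqrt_le_sqrt htail).trans (le_of_eq ?_)
    rw [Real.sqrt_mul (Real.exp_pos _).le, hπb,
      Real.sqrt_mul (by positivity : (0:ℝ) ≤ 8*Real.pi/(1-γ)),
      Real.sqrt_mul (Real.sqrt_nonneg _), hsqrtK, hquarter]
    ring
  calc |G y| ≤ Real.sqrt (∫ x in Set.Ioi y, g x ^ 2) *
      Real.sqrt (∫ x in Set.Ioi y, f x ^ 2) := hCS'
    _ ≤ (Real.sqrt (Real.sqrt (8*Real.pi/(1-γ))) * (1+t) ^ ((1:ℝ)/4) *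
          Real.exp (-(((1+γ)/2) * (y^2/s)))) *
        Real.sqrt (∫ x in Set.Ioi (0:ℝ), f x ^ 2) := by
        exact mul_le_mul hsqrt_tail hf_mono (Real.sqrt_nonneg _) (by positivity)
    _ = _ := by ring
end

section
/- Let t ≥ 0, γ ∈ (0,1), Ψ(t,y) = y²/(8(1+t)), and let G : ℝ × [0,∞) → ℝ be smooth with e^Ψ G ∈ L²(ℝ×ℝ₊). Define u(x,y) = G(x,y) − (y/(2(1+t))) e^{−y²/(4(1+t))} ∫₀^y e^{(y')²/(4(1+t))} G(x,y') dy'. Then there is a constant C depending only on γ such that ‖e^{γΨ} u‖_{L²(ℝ×ℝ₊)} ≤ C ‖e^{Ψ} G‖_{L²(ℝ×ℝ₊)}. -/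
open MeasureTheory

section WeightedL2Aux
open Real Set Filter

lemma aux_moment_int {b : ℝ} (hb : 0 < b) :
    IntegrableOn (fun y : ℝ => y^3 * Real.exp (-(b*y^2))) (Set.Ioi 0) := by
  have e2 : (fun y : ℝ => y^3 * Real.exp (-(b*y^2))) = fun y : ℝ => y ^ (3:ℝ) * Real.exp (-b*y^2) := by
    funext y
    rw [show (3:ℝ) = ((3:ℕ):ℝ) by norm_num, Real.rpow_natCast, neg_mul]
  rw [e2]
  exact integrableOn_rpow_mul_exp_neg_mul_sq hb (by norm_num)

lemma aux_moment {b : ℝ} (hb : 0 < b) :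
    ∫ y in Set.Ioi (0:ℝ), y^3 * Real.exp (-(b*y^2)) = 1/(2*b^2) := by
  have hderiv : ∀ y ∈ Set.Ici (0:ℝ), HasDerivAt
      (fun y : ℝ => -(y^2/(2*b) + 1/(2*b^2)) * Real.exp (-(b*y^2)))
      (y^3 * Real.exp (-(b*y^2))) y := by
    intro y _
    have h1 : HasDerivAt (fun y : ℝ => -(y^2/(2*b) + 1/(2*b^2))) (-(y/b)) y := by
      have h := (((hasDerivAt_pow 2 y).div_const (2*b)).add_const (1/(2*b^2))).neg
      refine h.congr_deriv ?_
      field_simp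
      ring
    have h2 : HasDerivAt (fun y : ℝ => Real.exp (-(b*y^2))) ((-(2*b*y)) * Real.exp (-(b*y^2))) y := by
      have h : HasDerivAt (fun y : ℝ => -(b*y^2)) (-(2*b*y)) y := by
        have := ((hasDerivAt_pow 2 y).const_mul b).neg
        refine this.congr_deriv ?_
        ring
      simpa [mul_comm] using h.exp
    have h := h1.mul h2
    refine h.congr_deriv ?_
    field_simp
    ring
  have htend : Tendsto (fun y : ℝ => -(y^2/(2*b) + 1/(2*b^2)) * Real.exp (-(b*y^2))) atTop (nhds 0) := by
    have hcomp : Tendsto (fun y : ℝ => b * y^2) atTop atTop :=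
      (tendsto_pow_atTop (by norm_num)).const_mul_atTop hb
    have h1 : Tendsto (fun s : ℝ => s * Real.exp (-s)) atTop (nhds 0) := by
      simpa using Real.tendsto_pow_mul_exp_neg_atTop_nhds_zero 1
    have h2 : Tendsto (fun y : ℝ => (b*y^2) * Real.exp (-(b*y^2))) atTop (nhds 0) := by
      simpa [Function.comp_def] using h1.comp hcomp
    have h3 : Tendsto (fun y : ℝ => Real.exp (-(b*y^2))) atTop (nhds 0) := by
      simpa [Function.comp_def] using Real.tendsto_exp_neg_atTop_nhds_zero.comp hcomp
    have key := (h2.const_mul (1/(2*b^2))).add (h3.const_mul (1/(2*b^2)))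
    simp only [mul_zero, add_zero, zero_add] at key
    have key2 := key.neg
    rw [neg_zero] at key2
    refine Filter.Tendsto.congr (fun y => ?_) key2
    field_simp
  have := integral_Ioi_of_hasDerivAt_of_tendsto' hderiv (aux_moment_int hb) htend
  rw [this]
  norm_num

lemma aux_CS {h : ℝ → ℝ} (hh : Continuous h) {y : ℝ} (hy : 0 ≤ y) :
    (∫ s in Set.Ioc (0:ℝ) y, |h s|)^2 ≤ y * ∫ s in Set.Ioc (0:ℝ) y, (h s)^2 := by
  set μ := (volume : Measure ℝ).restrict (Set.Ioc (0:ℝ) y) with hμ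
  haveI : IsFiniteMeasure μ := by
    constructor
    rw [hμ, Measure.restrict_apply_univ]
    exact measure_Ioc_lt_top
  have hpq : (2:ℝ).HolderConjugate 2 := ⟨by norm_num, by norm_num, by norm_num⟩
  obtain ⟨C, hC⟩ := (isCompact_Icc (a := (0:ℝ)) (b := y)).exists_bound_of_continuousOn hh.continuousOn
  have hmem : MemLp (fun s => |h s|) (ENNReal.ofReal 2) μ := by
    refine MemLp.of_bound (hh.abs.aestronglyMeasurable) C ?_
    filter_upwards [ae_restrict_mem measurableSet_Ioc] with s hs
    simpa [abs_abs] using hC s ⟨le_of_lt hs.1, hs.2⟩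
  have hconst : MemLp (fun _ : ℝ => (1:ℝ)) (ENNReal.ofReal 2) μ := memLp_const 1
  have key := integral_mul_le_Lp_mul_Lq_of_nonneg hpq
    (f := fun _ => (1:ℝ)) (g := fun s => |h s|)
    (Filter.Eventually.of_forall (fun _ => zero_le_one))
    (Filter.Eventually.of_forall (fun s => abs_nonneg _)) hconst hmem
  simp only [one_mul] at key
  have h1 : (∫ _ : ℝ, (1:ℝ) ^ (2:ℝ) ∂μ) = y := by
    simp [hμ, Real.volume_Ioc, ENNReal.toReal_ofReal hy, hy]
  have h2 : (∫ s, |h s| ^ (2:ℝ) ∂μ) = ∫ s, (h s)^2 ∂μ := by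
    refine integral_congr_ae (Filter.Eventually.of_forall (fun s => ?_))
    show |h s| ^ (2:ℝ) = h s ^ 2
    rw [show (2:ℝ) = ((2:ℕ):ℝ) by norm_num, Real.rpow_natCast, sq_abs]
  rw [h1, h2] at key
  have hI2 : 0 ≤ ∫ s, (h s)^2 ∂μ := integral_nonneg (fun s => sq_nonneg _)
  have hnn : 0 ≤ ∫ s, |h s| ∂μ := integral_nonneg (fun s => abs_nonneg _)
  calc (∫ s, |h s| ∂μ)^2 ≤ (y ^ (1/(2:ℝ)) * (∫ s, (h s)^2 ∂μ) ^ (1/(2:ℝ)))^2 := by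
        exact pow_le_pow_left₀ hnn key 2
    _ = y * ∫ s, (h s)^2 ∂μ := by
        rw [mul_pow, ← Real.rpow_natCast (y ^ (1/(2:ℝ))) 2, ← Real.rpow_natCast (_ ^ (1/(2:ℝ))) 2,
          ← Real.rpow_mul hy, ← Real.rpow_mul hI2]
        norm_num

lemma aux_pointwise (γ t : ℝ) (hγ1 : γ < 1) (ht : 0 ≤ t)
    (G : ℝ → ℝ → ℝ) (hG : Continuous (fun p : ℝ × ℝ => G p.1 p.2))
    (x y : ℝ) (hy : 0 < y)
    (Ix : IntegrableOn (fun y' => (Real.exp (y'^2/(8*(1+t))) * G x y')^2) (Set.Ioi 0)) :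
    (Real.exp (γ*(y^2/(8*(1+t)))) * (G x y - (y/(2*(1+t))) * Real.exp (-(y^2/(4*(1+t)))) *
        ∫ y' in (0:ℝ)..y, Real.exp (y'^2/(4*(1+t))) * G x y'))^2
      ≤ 2 * (Real.exp (y^2/(8*(1+t))) * G x y)^2
        + 2 * (y^3/(4*(1+t)^2) * Real.exp (-((1-γ)/(4*(1+t))*y^2))
            * ∫ y' in Set.Ioi (0:ℝ), (Real.exp (y'^2/(8*(1+t))) * G x y')^2) := by
  have hT : (0:ℝ) < 1 + t := by linarith
  have hT' : (1+t) ≠ 0 := ne_of_gt hT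
  have hGx : Continuous (fun y' : ℝ => G x y') :=
    hG.comp (Continuous.prodMk_right x)
  set I : ℝ := ∫ y' in (0:ℝ)..y, Real.exp (y'^2/(4*(1+t))) * G x y' with hIdef
  set Hx : ℝ := ∫ y' in Set.Ioi (0:ℝ), (Real.exp (y'^2/(8*(1+t))) * G x y')^2 with hHdef
  have hHnn : 0 ≤ Hx := integral_nonneg (fun s => sq_nonneg _)
  have hexp2 : ∀ s : ℝ, (Real.exp s)^2 = Real.exp (2*s) := fun s => by
    rw [two_mul, Real.exp_add, sq]
  set h : ℝ → ℝ := fun y' => Real.exp (y'^2/(8*(1+t))) * G x y' with hhdef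
  have hhc : Continuous h := ((Real.continuous_exp.comp (by fun_prop)).mul hGx)
  -- Step 1 : I^2 ≤ exp (y^2/(4*(1+t))) * (y * Hx)
  have habs : |I| ≤ Real.exp (y^2/(8*(1+t))) * ∫ y' in Set.Ioc (0:ℝ) y, |h y'| := by
    rw [hIdef, intervalIntegral.integral_of_le hy.le]
    have h1 : |∫ y' in Set.Ioc (0:ℝ) y, Real.exp (y'^2/(4*(1+t))) * G x y'|
        ≤ ∫ y' in Set.Ioc (0:ℝ) y, |Real.exp (y'^2/(4*(1+t))) * G x y'| := by
      have := norm_integral_le_integral_norm (μ := (volume : Measure ℝ).restrict (Set.Ioc 0 y))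
        (fun y' => Real.exp (y'^2/(4*(1+t))) * G x y')
      simp only [Real.norm_eq_abs] at this
      exact this
    refine h1.trans ?_
    rw [← integral_const_mul]
    refine setIntegral_mono_on ?_ ?_ measurableSet_Ioc ?_
    · exact ((Real.continuous_exp.comp (by fun_prop : Continuous fun y' : ℝ => y'^2/(4*(1+t)))).mul hGx).abs.integrableOn_Ioc
    · exact (continuous_const.mul hhc.abs).integrableOn_Ioc
    · intro s hs
      have hs2 : s^2 ≤ y^2 := by nlinarith [hs.1, hs.2]
      have e1 : s^2/(4*(1+t)) = s^2/(8*(1+t)) + s^2/(8*(1+t)) := by field_simp; ring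
      rw [abs_mul, abs_of_pos (Real.exp_pos _), e1, Real.exp_add, hhdef]
      rw [abs_mul, abs_of_pos (Real.exp_pos _), mul_assoc]
      refine mul_le_mul_of_nonneg_right ?_ (by positivity)
      exact Real.exp_le_exp.mpr (by gcongr)
  have hCS := aux_CS hhc hy.le
  have hIoc_le : (∫ y' in Set.Ioc (0:ℝ) y, (h y')^2) ≤ Hx := by
    rw [hHdef]
    refine setIntegral_mono_set Ix ?_ (HasSubset.Subset.eventuallyLE Set.Ioc_subset_Ioi_self)
    exact Filter.Eventually.of_forall (fun s => sq_nonneg _)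
  have hstep1 : I^2 ≤ Real.exp (y^2/(4*(1+t))) * (y * Hx) := by
    have h1 : I^2 ≤ (Real.exp (y^2/(8*(1+t))) * ∫ y' in Set.Ioc (0:ℝ) y, |h y'|)^2 := by
      rw [← sq_abs]
      exact pow_le_pow_left₀ (abs_nonneg _) habs 2
    have h2 : (Real.exp (y^2/(8*(1+t))))^2 = Real.exp (y^2/(4*(1+t))) := by
      rw [hexp2]; congr 1; field_simp; ring
    calc I^2 ≤ (Real.exp (y^2/(8*(1+t))) * ∫ y' in Set.Ioc (0:ℝ) y, |h y'|)^2 := h1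
      _ = (Real.exp (y^2/(8*(1+t))))^2 * (∫ y' in Set.Ioc (0:ℝ) y, |h y'|)^2 := by rw [mul_pow]
      _ ≤ (Real.exp (y^2/(8*(1+t))))^2 * (y * ∫ y' in Set.Ioc (0:ℝ) y, (h y')^2) := by
          exact mul_le_mul_of_nonneg_left hCS (sq_nonneg _)
      _ ≤ (Real.exp (y^2/(8*(1+t))))^2 * (y * Hx) := by
          refine mul_le_mul_of_nonneg_left ?_ (sq_nonneg _)
          exact mul_le_mul_of_nonneg_left hIoc_le hy.le
      _ = Real.exp (y^2/(4*(1+t))) * (y * Hx) := by rw [h2]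
  -- Step 2: assemble
  set A : ℝ := Real.exp (γ*(y^2/(8*(1+t)))) with hAdef
  set E : ℝ := Real.exp (y^2/(8*(1+t))) with hEdef
  set c : ℝ := (y/(2*(1+t))) * Real.exp (-(y^2/(4*(1+t)))) * I with hcdef
  have hAE : A ≤ E := by
    refine Real.exp_le_exp.mpr ?_
    have h0 : 0 ≤ y^2/(8*(1+t)) := by positivity
    nlinarith
  have hA0 : 0 ≤ A := (Real.exp_pos _).le
  have htri : (A * (G x y - c))^2 ≤ 2*(A*G x y)^2 + 2*(A*c)^2 := by nlinarith [sq_nonneg (A*G x y + A*c)]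
  have hAG : (A * G x y)^2 ≤ (E * G x y)^2 := by
    rw [mul_pow, mul_pow]
    exact mul_le_mul_of_nonneg_right (pow_le_pow_left₀ hA0 hAE 2) (sq_nonneg _)
  have hAc : (A*c)^2 ≤ y^3/(4*(1+t)^2) * Real.exp (-((1-γ)/(4*(1+t))*y^2)) * Hx := by
    have e0 : (A*c)^2 = (A^2 * ((y/(2*(1+t))) * Real.exp (-(y^2/(4*(1+t)))))^2) * I^2 := by
      rw [hcdef]; ring
    have hcoef : 0 ≤ A^2 * ((y/(2*(1+t))) * Real.exp (-(y^2/(4*(1+t)))))^2 := by positivity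
    have e2 : A^2 * Real.exp (-(y^2/(4*(1+t))))^2 * Real.exp (y^2/(4*(1+t)))
        = Real.exp (-((1-γ)/(4*(1+t))*y^2)) := by
      rw [hAdef, hexp2, hexp2, ← Real.exp_add, ← Real.exp_add]
      congr 1
      field_simp
      ring
    calc (A*c)^2 = (A^2 * ((y/(2*(1+t))) * Real.exp (-(y^2/(4*(1+t)))))^2) * I^2 := e0
      _ ≤ (A^2 * ((y/(2*(1+t))) * Real.exp (-(y^2/(4*(1+t)))))^2) * (Real.exp (y^2/(4*(1+t))) * (y * Hx)) :=
          mul_le_mul_of_nonneg_left hstep1 hcoef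
      _ = y^3/(4*(1+t)^2) * (A^2 * Real.exp (-(y^2/(4*(1+t))))^2 * Real.exp (y^2/(4*(1+t)))) * Hx := by
          field_simp
          ring
      _ = y^3/(4*(1+t)^2) * Real.exp (-((1-γ)/(4*(1+t))*y^2)) * Hx := by rw [e2]
  calc (A * (G x y - c))^2 ≤ 2*(A*G x y)^2 + 2*(A*c)^2 := htri
    _ ≤ 2*(E * G x y)^2 + 2*(y^3/(4*(1+t)^2) * Real.exp (-((1-γ)/(4*(1+t))*y^2)) * Hx) := by
        have := hAc
        nlinarith [hAG]

end WeightedL2Aux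

section Main
open Real Set Filter

/-- Weighted `L²` boundedness of the map `G ↦ u` inverting the good-unknown relation. -/

theorem weighted_L2_inversion (γ : ℝ) (hγ : γ ∈ Set.Ioo (0:ℝ) 1) :
    ∃ C : ℝ, 0 < C ∧ ∀ t : ℝ, 0 ≤ t → ∀ G : ℝ → ℝ → ℝ,
      ContDiff ℝ (⊤ : ℕ∞) (fun p : ℝ × ℝ => G p.1 p.2) →
      Integrable (fun p : ℝ × ℝ => (Real.exp (p.2^2 / (8*(1+t))) * G p.1 p.2)^2)
        ((volume : Measure ℝ).prod ((volume : Measure ℝ).restrict (Set.Ioi 0))) →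
      Real.sqrt (∫ p, (Real.exp (γ * (p.2^2 / (8*(1+t)))) *
          (G p.1 p.2 - (p.2 / (2*(1+t))) * Real.exp (-(p.2^2 / (4*(1+t)))) *
            ∫ y' in (0:ℝ)..p.2, Real.exp ((y')^2 / (4*(1+t))) * G p.1 y'))^2
          ∂((volume : Measure ℝ).prod ((volume : Measure ℝ).restrict (Set.Ioi 0))))
      ≤ C * Real.sqrt (∫ p, (Real.exp (p.2^2 / (8*(1+t))) * G p.1 p.2)^2
          ∂((volume : Measure ℝ).prod ((volume : Measure ℝ).restrict (Set.Ioi 0)))) := by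
  obtain ⟨hγ0, hγ1⟩ := hγ
  refine ⟨Real.sqrt (2 + 4/(1-γ)^2), Real.sqrt_pos.mpr (by positivity), ?_⟩
  intro t ht G hGsm hInt
  have hT : (0:ℝ) < 1 + t := by linarith
  have hT' : (1+t) ≠ 0 := ne_of_gt hT
  have hG : Continuous (fun p : ℝ × ℝ => G p.1 p.2) := hGsm.continuous
  set κ : Measure ℝ := (volume : Measure ℝ).restrict (Set.Ioi 0) with hκ
  set ν : Measure (ℝ × ℝ) := (volume : Measure ℝ).prod κ with hν
  set g2 : ℝ × ℝ → ℝ := fun p => (Real.exp (p.2^2 / (8*(1+t))) * G p.1 p.2)^2 with hg2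
  set Fu : ℝ × ℝ → ℝ := fun p => (Real.exp (γ * (p.2^2 / (8*(1+t)))) *
      (G p.1 p.2 - (p.2 / (2*(1+t))) * Real.exp (-(p.2^2 / (4*(1+t)))) *
        ∫ y' in (0:ℝ)..p.2, Real.exp ((y')^2 / (4*(1+t))) * G p.1 y'))^2 with hFu
  set H : ℝ → ℝ := fun x => ∫ y in Set.Ioi (0:ℝ), (Real.exp (y^2 / (8*(1+t))) * G x y)^2 with hH
  set b : ℝ := (1-γ)/(4*(1+t)) with hb
  have h1γ : (0:ℝ) < 1 - γ := by linarith
  have h1γ' : (1:ℝ) - γ ≠ 0 := ne_of_gt h1γ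
  have hbpos : 0 < b := by rw [hb]; exact div_pos h1γ (by linarith)
  set φ : ℝ → ℝ := fun y => y^3/(4*(1+t)^2) * Real.exp (-(b*y^2)) with hφ
  set R : ℝ := ∫ p, g2 p ∂ν with hR
  have hR0 : 0 ≤ R := integral_nonneg (fun p => sq_nonneg _)
  -- continuity / measurability
  have hg2c : Continuous g2 := by
    exact ((Real.continuous_exp.comp (by fun_prop)).mul hG).pow 2
  have hFuc : Continuous Fu := by
    have hIc : Continuous (fun p : ℝ × ℝ => ∫ y' in (0:ℝ)..p.2,
        Real.exp ((y')^2 / (4*(1+t))) * G p.1 y') := by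
      apply intervalIntegral.continuous_parametric_intervalIntegral_of_continuous
        (f := fun (p : ℝ × ℝ) (y' : ℝ) => Real.exp ((y')^2 / (4*(1+t))) * G p.1 y')
        (s := fun p : ℝ × ℝ => p.2)
      · exact (Real.continuous_exp.comp (by fun_prop)).mul
          (hG.comp (by fun_prop : Continuous fun q : (ℝ × ℝ) × ℝ => (q.1.1, q.2)))
      · exact continuous_snd
    exact ((Real.continuous_exp.comp (by fun_prop)).mul
      (hG.sub ((((continuous_snd.div_const _).mul
        (Real.continuous_exp.comp (by fun_prop))).mul hIc)))).pow 2
  have hHsm : StronglyMeasurable H := by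
    exact StronglyMeasurable.integral_prod_right
      (f := fun x y => (Real.exp (y^2 / (8*(1+t))) * G x y)^2) (hg2c.stronglyMeasurable)
  have hφc : Continuous φ := by
    exact (continuous_pow 3 |>.div_const _).mul (Real.continuous_exp.comp (by fun_prop))
  have hHnn : ∀ x, 0 ≤ H x := fun x => integral_nonneg (fun y => sq_nonneg _)
  -- a.e. facts
  have lift1 : ∀ᵐ p ∂ν, IntegrableOn
      (fun y' => (Real.exp (y'^2/(8*(1+t))) * G p.1 y')^2) (Set.Ioi 0) :=
    Measure.quasiMeasurePreserving_fst.tendsto_ae.eventually hInt.prod_right_ae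
  have lift2 : ∀ᵐ p ∂ν, 0 < p.2 :=
    Measure.quasiMeasurePreserving_snd.tendsto_ae.eventually (ae_restrict_mem measurableSet_Ioi)
  have hae : ∀ᵐ p ∂ν, ENNReal.ofReal (Fu p) ≤
      ENNReal.ofReal (2 * g2 p) + ENNReal.ofReal (2 * (φ p.2 * H p.1)) := by
    filter_upwards [lift1, lift2] with p hp1 hp2
    refine le_trans (ENNReal.ofReal_le_ofReal ?_) (ENNReal.ofReal_add_le)
    have := aux_pointwise γ t hγ1 ht G hG p.1 p.2 hp2 hp1
    calc Fu p ≤ 2 * (Real.exp (p.2^2/(8*(1+t))) * G p.1 p.2)^2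
        + 2 * (p.2^3/(4*(1+t)^2) * Real.exp (-((1-γ)/(4*(1+t))*p.2^2))
            * ∫ y' in Set.Ioi (0:ℝ), (Real.exp (y'^2/(8*(1+t))) * G p.1 y')^2) := this
      _ = 2 * g2 p + 2 * (φ p.2 * H p.1) := by rw [hg2, hφ, hH, hb]
  -- key lintegral bound
  have hg2lint : ∫⁻ p, ENNReal.ofReal (g2 p) ∂ν = ENNReal.ofReal R :=
    (ofReal_integral_eq_lintegral_ofReal hInt
      (Filter.Eventually.of_forall (fun p => sq_nonneg _))).symm
  have hB : ∫⁻ x, ENNReal.ofReal (H x) ∂(volume : Measure ℝ) = ENNReal.ofReal R := by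
    have hae2 : ∀ᵐ x ∂(volume : Measure ℝ), ENNReal.ofReal (H x)
        = ∫⁻ y, ENNReal.ofReal (g2 (x, y)) ∂κ := by
      filter_upwards [hInt.prod_right_ae] with x hx
      exact ofReal_integral_eq_lintegral_ofReal hx
        (Filter.Eventually.of_forall (fun y => sq_nonneg _))
    rw [lintegral_congr_ae hae2, ← lintegral_prod _
      (hg2c.measurable.ennreal_ofReal.aemeasurable)]
    exact hg2lint
  have hKφ : ∫⁻ y, ENNReal.ofReal (2 * φ y) ∂κ = ENNReal.ofReal (4/(1-γ)^2) := by
    have hint2 : IntegrableOn (fun y => 2 * φ y) (Set.Ioi (0:ℝ)) := by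
      have : IntegrableOn (fun y : ℝ => y^3 * Real.exp (-(b*y^2))) (Set.Ioi 0) :=
        aux_moment_int hbpos
      have h2 := (this.const_mul (2/(4*(1+t)^2)))
      refine h2.congr (Filter.Eventually.of_forall (fun y => ?_))
      rw [hφ]; ring
    have hnn2 : 0 ≤ᵐ[κ] fun y => 2 * φ y := by
      filter_upwards [ae_restrict_mem measurableSet_Ioi] with y hy
      rw [hφ]
      have hy' : (0:ℝ) < y := hy
      positivity
    rw [← ofReal_integral_eq_lintegral_ofReal hint2 hnn2]
    congr 1
    have e1 : ∀ y : ℝ, 2 * φ y = (2/(4*(1+t)^2)) * (y^3 * Real.exp (-(b*y^2))) := by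
      intro y; rw [hφ]; ring
    calc ∫ y in Set.Ioi (0:ℝ), 2 * φ y
        = ∫ y in Set.Ioi (0:ℝ), (2/(4*(1+t)^2)) * (y^3 * Real.exp (-(b*y^2))) := by
          exact integral_congr_ae (Filter.Eventually.of_forall (fun y => e1 y))
      _ = (2/(4*(1+t)^2)) * ∫ y in Set.Ioi (0:ℝ), y^3 * Real.exp (-(b*y^2)) := integral_const_mul _ _
      _ = (2/(4*(1+t)^2)) * (1/(2*b^2)) := by rw [aux_moment hbpos]
      _ = 4/(1-γ)^2 := by
          rw [hb, div_pow]
          have h2 : ((1-γ)^2 / (4*(1+t))^2) ≠ 0 := by positivity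
          field_simp
  have key : ∫⁻ p, ENNReal.ofReal (Fu p) ∂ν ≤ ENNReal.ofReal ((2 + 4/(1-γ)^2) * R) := by
    have step1 : ∫⁻ p, ENNReal.ofReal (Fu p) ∂ν ≤
        ∫⁻ p, (ENNReal.ofReal (2 * g2 p) + ENNReal.ofReal (2 * (φ p.2 * H p.1))) ∂ν :=
      lintegral_mono_ae hae
    have step2 : ∫⁻ p, (ENNReal.ofReal (2 * g2 p) + ENNReal.ofReal (2 * (φ p.2 * H p.1))) ∂ν
        = (∫⁻ p, ENNReal.ofReal (2 * g2 p) ∂ν) + ∫⁻ p, ENNReal.ofReal (2 * (φ p.2 * H p.1)) ∂ν :=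
      lintegral_add_left ((continuous_const.mul hg2c).measurable.ennreal_ofReal) _
    have A1 : ∫⁻ p, ENNReal.ofReal (2 * g2 p) ∂ν = ENNReal.ofReal (2 * R) := by
      rw [← ofReal_integral_eq_lintegral_ofReal (hInt.const_mul 2)
        (Filter.Eventually.of_forall (fun p => by positivity))]
      congr 1
      rw [hR, ← integral_const_mul]
    have A2 : ∫⁻ p, ENNReal.ofReal (2 * (φ p.2 * H p.1)) ∂ν = ENNReal.ofReal ((4/(1-γ)^2) * R) := by
      have e1 : ∀ p : ℝ × ℝ, ENNReal.ofReal (2 * (φ p.2 * H p.1))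
          = ENNReal.ofReal (2 * φ p.2) * ENNReal.ofReal (H p.1) := by
        intro p
        rw [show 2 * (φ p.2 * H p.1) = (2 * φ p.2) * H p.1 by ring]
        exact ENNReal.ofReal_mul' (hHnn p.1)
      simp_rw [e1]
      have hmeas : AEMeasurable (fun p : ℝ × ℝ =>
          ENNReal.ofReal (2 * φ p.2) * ENNReal.ofReal (H p.1)) ν := by
        exact ((((continuous_const.mul hφc)).measurable.comp measurable_snd).ennreal_ofReal.mul
          ((hHsm.measurable.comp measurable_fst).ennreal_ofReal)).aemeasurable
      rw [lintegral_prod _ hmeas]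
      have inner : ∀ x : ℝ, ∫⁻ y, ENNReal.ofReal (2 * φ y) * ENNReal.ofReal (H x) ∂κ
          = ENNReal.ofReal (4/(1-γ)^2) * ENNReal.ofReal (H x) := by
        intro x
        rw [lintegral_mul_const' _ _ ENNReal.ofReal_ne_top, hKφ]
      simp_rw [inner]
      rw [lintegral_const_mul' _ _ ENNReal.ofReal_ne_top, hB, ← ENNReal.ofReal_mul (by positivity)]
    calc ∫⁻ p, ENNReal.ofReal (Fu p) ∂ν
        ≤ (∫⁻ p, ENNReal.ofReal (2 * g2 p) ∂ν) + ∫⁻ p, ENNReal.ofReal (2 * (φ p.2 * H p.1)) ∂ν :=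
          step1.trans (le_of_eq step2)
      _ = ENNReal.ofReal (2 * R) + ENNReal.ofReal ((4/(1-γ)^2) * R) := by rw [A1, A2]
      _ = ENNReal.ofReal ((2 + 4/(1-γ)^2) * R) := by
          rw [← ENNReal.ofReal_add (by positivity) (by positivity)]
          congr 1
          ring
  -- conclusion
  have heq : ∫ p, Fu p ∂ν = (∫⁻ p, ENNReal.ofReal (Fu p) ∂ν).toReal :=
    integral_eq_lintegral_of_nonneg_ae (Filter.Eventually.of_forall (fun p => sq_nonneg _))
      hFuc.aestronglyMeasurable
  have hle : ∫ p, Fu p ∂ν ≤ (2 + 4/(1-γ)^2) * R := by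
    rw [heq]
    exact ENNReal.toReal_le_of_le_ofReal (by positivity) key
  calc Real.sqrt (∫ p, Fu p ∂ν) ≤ Real.sqrt ((2 + 4/(1-γ)^2) * R) := Real.sqrt_le_sqrt hle
    _ = Real.sqrt (2 + 4/(1-γ)^2) * Real.sqrt R := Real.sqrt_mul (by positivity) R

end Main
end

section
/- Let t ≥ 0, and suppose E : [0,∞) → [0,∞) is C¹ and D : [0,∞) → [0,∞) is continuous, satisfying (d/dt)E(t)² + D(t)² + (2/(1+t)) E(t)² ≤ ε²(1+t) h(t)² + (1/(1+t)) E(t)², where h ≥ 0 and E(0) = 0. Assume moreover the a priori bound sup_{t' ∈ [0,t]} (1+t')^{5/4} E(t') ≤ M. Then for every t > 0, ∫_{t/2}^{t} (1+t')^{5/2} D(t')² dt' ≤ M²(1 + (5/2)ln 2) + ε² ∫_{t/2}^{t} (1+t')^{7/2} h(t')² dt'. -/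
open MeasureTheory intervalIntegral Set

/-!
Multiplying the energy inequality by `(1+s)^(5/2)` turns it into
`(1+s)^(5/2) D² ≤ ε² (1+s)^(7/2) h² + (3/2) (1+s)^(3/2) E² - F'` with `F = (1+s)^(5/2) E²`.
Integrating over `[t/2, t]`, the boundary term is at most `F (t/2) ≤ M²`, and the a priori bound
gives `(1+s)^(3/2) E² ≤ M² / (1+s)`, whose integral over `[t/2, t]` is at most `M² log 2`.
-/

lemma integral_le_integral_sub_of_hasDerivAt {f g F F' : ℝ → ℝ} {a b : ℝ} (hab : a ≤ b)
    (hF : ∀ x ∈ Icc a b, HasDerivAt F (F' x) x)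
    (hf : IntervalIntegrable f volume a b) (hg : IntervalIntegrable g volume a b)
    (hF' : IntervalIntegrable F' volume a b) (hle : ∀ x ∈ Icc a b, f x ≤ g x - F' x) :
    ∫ x in a..b, f x ≤ (∫ x in a..b, g x) - (F b - F a) := by
  have hFTC : ∫ x in a..b, F' x = F b - F a :=
    integral_eq_sub_of_hasDerivAt (fun x hx => hF x (uIcc_of_le hab ▸ hx)) hF'
  calc ∫ x in a..b, f x ≤ ∫ x in a..b, (g x - F' x) := integral_mono_on hab hf (hg.sub hF') hle
    _ = _ := by rw [integral_sub hg hF', hFTC]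

lemma continuousOn_one_add_rpow {a b : ℝ} (ha : -1 < a) (p : ℝ) :
    ContinuousOn (fun s : ℝ => (1 + s) ^ p) (Icc a b) :=
  ContinuousOn.rpow_const (f := fun s : ℝ => 1 + s) (by fun_prop)
    fun s hs => Or.inl (by linarith [hs.1] : 0 < 1 + s).ne'

lemma hasDerivAt_one_add_rpow_mul_sq {E : ℝ → ℝ} {e' s : ℝ} (p : ℝ) (hs : 0 < 1 + s)
    (hE : HasDerivAt E e' s) :
    HasDerivAt (fun s => (1 + s) ^ p * E s ^ 2)
      (p * (1 + s) ^ (p - 1) * E s ^ 2 + (1 + s) ^ p * (2 * E s * e')) s := by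
  have hw := ((hasDerivAt_id s).const_add 1).rpow_const (p := p) (Or.inl hs.ne')
  refine (hw.mul (hE.pow 2)).congr_deriv ?_
  simp only [id, one_mul, Pi.pow_apply]
  ring

lemma rpow_mul_sq_le_of_energy_ineq {x p ε e e' d k : ℝ} (hx : 0 < x)
    (h : 2 * e * e' + d ^ 2 + (2 / x) * e ^ 2 ≤ ε ^ 2 * x * k ^ 2 + (1 / x) * e ^ 2) :
    x ^ p * d ^ 2 ≤ ε ^ 2 * x ^ (p + 1) * k ^ 2 + (p - 1) * x ^ (p - 1) * e ^ 2
      - (p * x ^ (p - 1) * e ^ 2 + x ^ p * (2 * e * e')) := by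
  have hcleared : x * (2 * e * e' + d ^ 2) + 2 * e ^ 2 ≤ ε ^ 2 * x ^ 2 * k ^ 2 + e ^ 2 := by
    have := mul_le_mul_of_nonneg_left h hx.le
    field_simp at this
    linarith
  have hxp : x ^ p = x ^ (p - 1) * x := by rw [← Real.rpow_add_one hx.ne', sub_add_cancel]
  rw [Real.rpow_add_one hx.ne', hxp]
  have := mul_le_mul_of_nonneg_left hcleared (Real.rpow_nonneg hx.le (p - 1))
  linarith

lemma rpow_mul_sq_le_sq {x p q e M : ℝ} (hx : 0 ≤ x) (he : 0 ≤ e) (hpq : p = 2 * q)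
    (h : x ^ q * e ≤ M) : x ^ p * e ^ 2 ≤ M ^ 2 := by
  have hx2 : x ^ p = (x ^ q) ^ 2 := by
    rw [hpq, mul_comm, ← Real.rpow_mul_natCast hx]; norm_num
  rw [hx2, ← mul_pow]
  exact pow_le_pow_left₀ (mul_nonneg (Real.rpow_nonneg hx q) he) h 2

lemma integral_inv_one_add_le_log_two {t : ℝ} (ht : 0 ≤ t) :
    ∫ s in t / 2..t, (1 + s)⁻¹ ≤ Real.log 2 := by
  rw [integral_comp_add_left (fun x => x⁻¹), integral_inv_of_pos (by linarith) (by linarith)]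
  apply Real.log_le_log (by positivity)
  rw [div_le_iff₀ (by linarith)]
  linarith

lemma integral_one_add_rpow_sub_one_mul_sq_le_log_two {E : ℝ → ℝ} {t p M : ℝ} (ht : 0 ≤ t)
    (hE : ContinuousOn E (Icc (t / 2) t))
    (hbound : ∀ s ∈ Icc (t / 2) t, (1 + s) ^ p * E s ^ 2 ≤ M ^ 2) :
    ∫ s in t / 2..t, (1 + s) ^ (p - 1) * E s ^ 2 ≤ M ^ 2 * Real.log 2 := by
  have hab : t / 2 ≤ t := by linarith
  have hpos : ∀ s ∈ Icc (t / 2) t, 0 < 1 + s := fun s hs => by linarith [hs.1]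
  calc ∫ s in t / 2..t, (1 + s) ^ (p - 1) * E s ^ 2
      ≤ ∫ s in t / 2..t, M ^ 2 * (1 + s)⁻¹ := by
        refine integral_mono_on hab
          (((continuousOn_one_add_rpow (by linarith) _).mul (hE.pow 2)).intervalIntegrable_of_Icc hab)
          ((continuousOn_const.mul ((continuous_const.add continuous_id).continuousOn.inv₀
            fun s hs => (hpos s hs).ne')).intervalIntegrable_of_Icc hab) fun s hs => ?_
        rw [Real.rpow_sub_one (hpos s hs).ne', div_mul_eq_mul_div, div_eq_mul_inv]
        exact mul_le_mul_of_nonneg_right (by linarith [hbound s hs]) (inv_nonneg.2 (hpos s hs).le)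
    _ ≤ M ^ 2 * Real.log 2 := by
        rw [intervalIntegral.integral_const_mul]
        exact mul_le_mul_of_nonneg_left (integral_inv_one_add_le_log_two ht) (sq_nonneg M)

lemma integral_one_add_rpow_mul_sq_le_of_energy_ineq {E E' D h : ℝ → ℝ} {ε p a b : ℝ}
    (hab : a ≤ b) (ha : -1 < a) (hEderiv : ∀ s ∈ Icc a b, HasDerivAt E (E' s) s)
    (hD : ContinuousOn D (Icc a b)) (hh : ContinuousOn h (Icc a b))
    (hE' : ContinuousOn E' (Icc a b))
    (hineq : ∀ s ∈ Icc a b,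
      2 * E s * E' s + D s ^ 2 + (2 / (1 + s)) * E s ^ 2
        ≤ ε ^ 2 * (1 + s) * h s ^ 2 + (1 / (1 + s)) * E s ^ 2) :
    ∫ s in a..b, (1 + s) ^ p * D s ^ 2
      ≤ ε ^ 2 * (∫ s in a..b, (1 + s) ^ (p + 1) * h s ^ 2)
        + (p - 1) * (∫ s in a..b, (1 + s) ^ (p - 1) * E s ^ 2)
        - ((1 + b) ^ p * E b ^ 2 - (1 + a) ^ p * E a ^ 2) := by
  have hpos : ∀ s ∈ Icc a b, 0 < 1 + s := fun s hs => by linarith [hs.1]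
  have hw := continuousOn_one_add_rpow (b := b) ha
  have hE : ContinuousOn E (Icc a b) := fun s hs => (hEderiv s hs).continuousAt.continuousWithinAt
  have hH : IntervalIntegrable (fun s => (1 + s) ^ (p + 1) * h s ^ 2) volume a b :=
    ((hw (p + 1)).mul (hh.pow 2)).intervalIntegrable_of_Icc hab
  have hW : IntervalIntegrable (fun s => (1 + s) ^ (p - 1) * E s ^ 2) volume a b :=
    ((hw (p - 1)).mul (hE.pow 2)).intervalIntegrable_of_Icc hab
  have hdiss := integral_le_integral_sub_of_hasDerivAt (f := fun s => (1 + s) ^ p * D s ^ 2)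
    (g := fun s => ε ^ 2 * ((1 + s) ^ (p + 1) * h s ^ 2) + (p - 1) * ((1 + s) ^ (p - 1) * E s ^ 2))
    hab (fun s hs => hasDerivAt_one_add_rpow_mul_sq p (hpos s hs) (hEderiv s hs))
    (((hw p).mul (hD.pow 2)).intervalIntegrable_of_Icc hab)
    ((hH.const_mul _).add (hW.const_mul _))
    ((((continuousOn_const.mul (hw _)).mul (hE.pow 2)).add
      ((hw p).mul ((continuousOn_const.mul hE).mul hE'))).intervalIntegrable_of_Icc hab)
    (fun s hs => by
      have := rpow_mul_sq_le_of_energy_ineq (p := p) (hpos s hs) (hineq s hs)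
      linarith)
  rwa [intervalIntegral.integral_add (hH.const_mul _) (hW.const_mul _),
    intervalIntegral.integral_const_mul, intervalIntegral.integral_const_mul] at hdiss

theorem weighted_dissipation_estimate_general (E E' D h : ℝ → ℝ) (ε M : ℝ)
    (hEderiv : ∀ s : ℝ, 0 ≤ s → HasDerivAt E (E' s) s)
    (hEnn : ∀ s : ℝ, 0 ≤ E s)
    (hDcont : Continuous D) (hhcont : Continuous h) (hE'cont : Continuous E')
    (hineq : ∀ s : ℝ, 0 ≤ s →
      2 * E s * E' s + (D s)^2 + (2 / (1+s)) * (E s)^2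
        ≤ ε^2 * (1+s) * (h s)^2 + (1 / (1+s)) * (E s)^2)
    (t : ℝ) (ht : 0 < t)
    (hsup : ∀ s ∈ Set.Icc (0:ℝ) t, (1+s) ^ ((5:ℝ)/4) * E s ≤ M) :
    (∫ s in (t/2)..t, (1+s) ^ ((5:ℝ)/2) * (D s)^2)
      ≤ M^2 * (1 + (5/2) * Real.log 2)
        + ε^2 * ∫ s in (t/2)..t, (1+s) ^ ((7:ℝ)/2) * (h s)^2 := by
  have hab : t / 2 ≤ t := by linarith
  have hnn : ∀ s ∈ Icc (t / 2) t, 0 ≤ s := fun s hs => by linarith [hs.1]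
  have hdiss := integral_one_add_rpow_mul_sq_le_of_energy_ineq (p := 5 / 2) hab (by linarith)
    (fun s hs => hEderiv s (hnn s hs)) hDcont.continuousOn hhcont.continuousOn
    hE'cont.continuousOn (fun s hs => hineq s (hnn s hs))
  have hbound : ∀ s ∈ Icc (t / 2) t, (1 + s) ^ ((5:ℝ) / 2) * E s ^ 2 ≤ M ^ 2 := fun s hs =>
    rpow_mul_sq_le_sq (by linarith [hnn s hs]) (hEnn s) (by norm_num) (hsup s ⟨hnn s hs, hs.2⟩)
  have hlog := integral_one_add_rpow_sub_one_mul_sq_le_log_two ht.le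
    (fun s hs => (hEderiv s (hnn s hs)).continuousAt.continuousWithinAt) hbound
  have hFt : 0 ≤ (1 + t) ^ ((5:ℝ) / 2) * E t ^ 2 := by positivity
  have hFa := hbound (t / 2) ⟨le_rfl, hab⟩
  have hlog_nonneg : 0 ≤ M ^ 2 * Real.log 2 := by positivity
  rw [show (5:ℝ) / 2 + 1 = 7 / 2 by norm_num] at hdiss
  linarith

/-- Weighted dissipation estimate on the dyadic interval `[t/2, t]`. -/
theorem weighted_dissipation_estimate (E E' D h : ℝ → ℝ) (ε M : ℝ)
    (hε : 0 ≤ ε) (hM : 0 ≤ M)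
    (hEderiv : ∀ s : ℝ, 0 ≤ s → HasDerivAt E (E' s) s)
    (hEnn : ∀ s : ℝ, 0 ≤ E s) (hDnn : ∀ s : ℝ, 0 ≤ D s) (hhnn : ∀ s : ℝ, 0 ≤ h s)
    (hDcont : Continuous D) (hhcont : Continuous h) (hE'cont : Continuous E')
    (hE0 : E 0 = 0)
    (hineq : ∀ s : ℝ, 0 ≤ s →
      2 * E s * E' s + (D s)^2 + (2 / (1+s)) * (E s)^2
        ≤ ε^2 * (1+s) * (h s)^2 + (1 / (1+s)) * (E s)^2)
    (t : ℝ) (ht : 0 < t)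
    (hsup : ∀ s ∈ Set.Icc (0:ℝ) t, (1+s) ^ ((5:ℝ)/4) * E s ≤ M) :
    (∫ s in (t/2)..t, (1+s) ^ ((5:ℝ)/2) * (D s)^2)
      ≤ M^2 * (1 + (5/2) * Real.log 2)
        + ε^2 * ∫ s in (t/2)..t, (1+s) ^ ((7:ℝ)/2) * (h s)^2 :=
  weighted_dissipation_estimate_general E E' D h ε M hEderiv hEnn hDcont hhcont hE'cont hineq t ht
    hsup
end

section
/- Let t ≥ 0, Ψ(t,y) = y²/(8(1+t)), and let w : ℝ×[0,∞) → ℝ be smooth with e^{(3/4)Ψ} ∂_y w ∈ L²(ℝ×ℝ₊) and w(x,y) → 0 as y → ∞. Then there is an absolute constant C such that ‖e^{(3/4)Ψ} w‖_{L^∞_y L²_x} ≤ C (1+t)^{1/4} ‖e^{(3/4)Ψ} ∂_y w‖_{L²(ℝ×ℝ₊)}, where ‖f‖_{L^∞_y L²_x} = sup_{y≥0} (∫_ℝ f(x,y)² dx)^{1/2}. -/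
open MeasureTheory Filter

/-- `L^∞_y L²_x` bound by the weighted `L²` norm of the vertical derivative. -/
theorem Linfty_L2_bound :
    ∃ C : ℝ, 0 < C ∧ ∀ t : ℝ, 0 ≤ t → ∀ w : ℝ → ℝ → ℝ,
      ContDiff ℝ (⊤ : ℕ∞) (fun p : ℝ × ℝ => w p.1 p.2) →
      (∀ x : ℝ, Tendsto (fun y => w x y) atTop (nhds 0)) →
      Integrable (fun p : ℝ × ℝ =>
          (Real.exp ((3/4) * (p.2^2 / (8*(1+t)))) * deriv (w p.1) p.2)^2)
        ((volume : Measure ℝ).prod ((volume : Measure ℝ).restrict (Set.Ioi 0))) →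
      ∀ y : ℝ, 0 ≤ y →
        Real.sqrt (∫ x : ℝ, (Real.exp ((3/4) * (y^2 / (8*(1+t)))) * w x y)^2)
          ≤ C * (1+t) ^ ((1:ℝ)/4) *
            Real.sqrt (∫ p, (Real.exp ((3/4) * (p.2^2 / (8*(1+t)))) * deriv (w p.1) p.2)^2
              ∂((volume : Measure ℝ).prod ((volume : Measure ℝ).restrict (Set.Ioi 0)))) := by
  refine ⟨6, by norm_num, ?_⟩
  intro t ht w hw hlim hint y hy
  have ht1 : (0:ℝ) < 1 + t := by linarith
  set q : ℝ := 3 / (32 * (1 + t)) with hq_def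
  have hq : 0 < q := by positivity
  have hc : 0 < 2 * q := by positivity
  have hWq : ∀ z : ℝ, Real.exp ((3/4) * (z^2 / (8*(1+t)))) = Real.exp (q * z^2) := by
    intro z; congr 1; rw [hq_def]
    rw [div_mul_div_comm, mul_comm (3/(32*(1+t))) (z^2), ← mul_div_assoc,
      div_eq_div_iff (by positivity) (by positivity)]
    ring
  simp only [hWq] at hint ⊢
  have expsq : ∀ u : ℝ, Real.exp u ^ 2 = Real.exp (2*u) := fun u => by
    rw [sq, ← Real.exp_add]; ring_nf
  -- Gaussian tail bound
  have gauss : ∀ z : ℝ, 0 ≤ z →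
      (∫ s in Set.Ioi z, Real.exp (-(2*q) * s^2))
        ≤ Real.exp (-(2*q) * z^2) * (6 * Real.sqrt (1+t)) := by
    intro z hz
    have hint1 : IntegrableOn (fun s : ℝ => Real.exp (-(2*q) * s^2)) (Set.Ioi z) :=
      (integrable_exp_neg_mul_sq hc).integrableOn
    have hint2 : Integrable (fun s : ℝ => Real.exp (-(2*q) * (s - z)^2)) :=
      (integrable_exp_neg_mul_sq hc).comp_sub_right z
    have step1 : (∫ s in Set.Ioi z, Real.exp (-(2*q) * s^2))
        ≤ ∫ s in Set.Ioi z, Real.exp (-(2*q) * z^2) * Real.exp (-(2*q) * (s-z)^2) := by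
      refine setIntegral_mono_on hint1 ((hint2.const_mul _).integrableOn) measurableSet_Ioi ?_
      intro s hs
      rw [← Real.exp_add]
      apply Real.exp_le_exp.2
      have hzs : z ≤ s := le_of_lt hs
      nlinarith [mul_nonneg hz (sub_nonneg.2 hzs), hc.le]
    have step2 : (∫ s in Set.Ioi z, Real.exp (-(2*q) * z^2) * Real.exp (-(2*q) * (s-z)^2))
        = Real.exp (-(2*q) * z^2) * ∫ s in Set.Ioi z, Real.exp (-(2*q) * (s-z)^2) :=
      integral_const_mul _ _
    have step3 : (∫ s in Set.Ioi z, Real.exp (-(2*q) * (s-z)^2))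
        ≤ ∫ s : ℝ, Real.exp (-(2*q) * (s-z)^2) :=
      setIntegral_le_integral hint2 (ae_of_all _ fun s => (Real.exp_pos _).le)
    have step4 : (∫ s : ℝ, Real.exp (-(2*q) * (s-z)^2)) = Real.sqrt (Real.pi / (2*q)) := by
      rw [integral_sub_right_eq_self (fun s : ℝ => Real.exp (-(2*q) * s^2)) z,
        integral_gaussian]
    have step5 : Real.sqrt (Real.pi / (2*q)) ≤ 6 * Real.sqrt (1+t) := by
      have h2q : 2*q = 3/(16*(1+t)) := by
        rw [hq_def]; ring_nf
        rw [show (32:ℝ)+t*32 = 2*(16+t*16) by ring, mul_inv]; ring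
      have e2 : Real.pi / (2*q) ≤ 36 * (1+t) := by
        rw [h2q, div_div_eq_mul_div, div_le_iff₀ (by norm_num : (0:ℝ) < 3)]
        nlinarith [Real.pi_le_four, ht1]
      calc Real.sqrt (Real.pi / (2*q)) ≤ Real.sqrt (36 * (1+t)) := Real.sqrt_le_sqrt e2
        _ = 6 * Real.sqrt (1+t) := by
            rw [show (36:ℝ) * (1+t) = 6^2 * (1+t) by norm_num,
              Real.sqrt_mul (by positivity), Real.sqrt_sq (by norm_num : (0:ℝ) ≤ 6)]
    calc (∫ s in Set.Ioi z, Real.exp (-(2*q) * s^2))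
        ≤ Real.exp (-(2*q) * z^2) * ∫ s in Set.Ioi z, Real.exp (-(2*q) * (s-z)^2) := by
          rw [← step2]; exact step1
      _ ≤ Real.exp (-(2*q) * z^2) * (6 * Real.sqrt (1+t)) := by
          refine mul_le_mul_of_nonneg_left (step3.trans ?_) (Real.exp_pos _).le
          rw [step4]; exact step5
  -- pointwise-in-x estimate
  have key : ∀ x : ℝ,
      IntegrableOn (fun s => (Real.exp (q*s^2) * deriv (w x) s)^2) (Set.Ioi 0) →
      (Real.exp (q*y^2) * w x y)^2
        ≤ 6 * Real.sqrt (1+t) * ∫ s in Set.Ioi 0, (Real.exp (q*s^2) * deriv (w x) s)^2 := by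
    intro x hx
    set d := deriv (w x) with hd_def
    have hwx : ContDiff ℝ (⊤ : ℕ∞) (w x) := hw.comp ((contDiff_const (c := x)).prodMk contDiff_id)
    have hd_cont : Continuous d := hwx.continuous_deriv (by simp)
    have hxy : IntegrableOn (fun s => (Real.exp (q*s^2) * d s)^2) (Set.Ioi y) :=
      hx.mono_set (Set.Ioi_subset_Ioi hy)
    have hge : IntegrableOn (fun s : ℝ => Real.exp (-(2*q) * s^2)) (Set.Ioi y) :=
      (integrable_exp_neg_mul_sq hc).integrableOn
    have hdint : IntegrableOn d (Set.Ioi y) := by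
      refine Integrable.mono' ((hge.add hxy).div_const 2) (hd_cont.aestronglyMeasurable) ?_
      refine ae_of_all _ fun s => ?_
      simp only [Pi.add_apply]
      set a := Real.exp (q*s^2) with ha
      set b := Real.exp (-(q*s^2)) with hb
      have h1 : Real.exp (-(2*q) * s^2) = b * b := by
        rw [hb, ← Real.exp_add]; congr 1; ring
      have h2 : b * a = 1 := by rw [ha, hb, ← Real.exp_add]; simp
      have h4 : b * a * |d s| = |d s| := by rw [h2, one_mul]
      have h6 : a^2 * |d s|^2 = a^2 * (d s)^2 := by rw [sq_abs]
      rw [Real.norm_eq_abs, h1]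
      nlinarith [sq_nonneg (b - a * |d s|), h4, h6, abs_nonneg (d s)]
    have habs : IntegrableOn (fun s => |d s|) (Set.Ioi y) := hdint.abs
    -- FTC bound
    have hD : |w x y| ≤ ∫ s in Set.Ioi y, |d s| := by
      have hlim' : Tendsto (fun Y => |w x Y| + ∫ s in Set.Ioi y, |d s|) atTop
          (nhds (∫ s in Set.Ioi y, |d s|)) := by
        have := ((hlim x).abs.add (tendsto_const_nhds
          (x := ∫ s in Set.Ioi y, |d s|) (f := atTop)))
        simpa using this
      refine ge_of_tendsto hlim' ?_
      filter_upwards [eventually_ge_atTop y] with Y hY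
      have hftc : ∫ s in y..Y, d s = w x Y - w x y :=
        intervalIntegral.integral_deriv_eq_sub
          (fun z _ => (hwx.differentiable (by simp)) z) (hd_cont.intervalIntegrable _ _)
      have h2 : |∫ s in y..Y, d s| ≤ ∫ s in y..Y, |d s| :=
        intervalIntegral.abs_integral_le_integral_abs hY
      have h3 : (∫ s in y..Y, |d s|) ≤ ∫ s in Set.Ioi y, |d s| := by
        rw [intervalIntegral.integral_of_le hY]
        exact setIntegral_mono_set habs (ae_of_all _ fun s => abs_nonneg _)
          (HasSubset.Subset.eventuallyLE Set.Ioc_subset_Ioi_self)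
      have h4 : |w x y| ≤ |w x Y| + |∫ s in y..Y, d s| := by
        rw [hftc]
        calc |w x y| = |w x Y - (w x Y - w x y)| := by ring_nf
          _ ≤ |w x Y| + |w x Y - w x y| := abs_sub _ _
      linarith
    -- Cauchy–Schwarz
    have hfg : (∫ s in Set.Ioi y, |d s|)
        ≤ Real.sqrt (∫ s in Set.Ioi y, Real.exp (-(2*q) * s^2))
          * Real.sqrt (∫ s in Set.Ioi y, (Real.exp (q*s^2) * d s)^2) := by
      have hconj : Real.HolderConjugate 2 2 := Real.HolderConjugate.two_two
      have hof : (ENNReal.ofReal (2:ℝ)) = 2 := by norm_num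
      have hcf : Continuous fun s : ℝ => Real.exp (-(q*s^2)) := by fun_prop
      have hcg : Continuous fun s : ℝ => Real.exp (q*s^2) * |d s| := by fun_prop
      have hmf : MemLp (fun s : ℝ => Real.exp (-(q*s^2))) (ENNReal.ofReal 2)
          (volume.restrict (Set.Ioi y)) := by
        rw [hof, memLp_two_iff_integrable_sq hcf.aestronglyMeasurable]
        refine hge.congr (ae_of_all _ fun s => ?_)
        show Real.exp (-(2*q) * s^2) = Real.exp (-(q*s^2)) ^ 2
        rw [expsq]; congr 1; ring
      have hmg : MemLp (fun s : ℝ => Real.exp (q*s^2) * |d s|) (ENNReal.ofReal 2)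
          (volume.restrict (Set.Ioi y)) := by
        rw [hof, memLp_two_iff_integrable_sq hcg.aestronglyMeasurable]
        refine hxy.congr (ae_of_all _ fun s => ?_)
        show (Real.exp (q*s^2) * d s)^2 = (Real.exp (q*s^2) * |d s|) ^ 2
        rw [mul_pow, mul_pow, sq_abs]
      have hCS := integral_mul_le_Lp_mul_Lq_of_nonneg hconj
        (ae_of_all _ fun s => (Real.exp_pos _).le)
        (ae_of_all _ fun s => mul_nonneg (Real.exp_pos _).le (abs_nonneg _)) hmf hmg
      have e0 : (∫ s in Set.Ioi y, Real.exp (-(q*s^2)) * (Real.exp (q*s^2) * |d s|))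
          = ∫ s in Set.Ioi y, |d s| := by
        refine integral_congr_ae (ae_of_all _ fun s => ?_)
        show Real.exp (-(q*s^2)) * (Real.exp (q*s^2) * |d s|) = |d s|
        rw [← mul_assoc, ← Real.exp_add]
        simp
      have e1 : (∫ s in Set.Ioi y, Real.exp (-(q*s^2)) ^ (2:ℝ))
          = ∫ s in Set.Ioi y, Real.exp (-(2*q) * s^2) := by
        refine integral_congr_ae (ae_of_all _ fun s => ?_)
        show Real.exp (-(q*s^2)) ^ (2:ℝ) = Real.exp (-(2*q) * s^2)
        rw [Real.rpow_two, expsq]; congr 1; ring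
      have e2 : (∫ s in Set.Ioi y, (Real.exp (q*s^2) * |d s|) ^ (2:ℝ))
          = ∫ s in Set.Ioi y, (Real.exp (q*s^2) * d s)^2 := by
        refine integral_congr_ae (ae_of_all _ fun s => ?_)
        show (Real.exp (q*s^2) * |d s|) ^ (2:ℝ) = (Real.exp (q*s^2) * d s)^2
        rw [Real.rpow_two, mul_pow, mul_pow, sq_abs]
      rw [e0, e1, e2, ← Real.sqrt_eq_rpow, ← Real.sqrt_eq_rpow] at hCS
      exact hCS
    -- combine
    have hA : (∫ s in Set.Ioi y, Real.exp (-(2*q) * s^2))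
        ≤ Real.exp (-(2*q) * y^2) * (6 * Real.sqrt (1+t)) := gauss y hy
    have hB : (∫ s in Set.Ioi y, (Real.exp (q*s^2) * d s)^2)
        ≤ ∫ s in Set.Ioi 0, (Real.exp (q*s^2) * d s)^2 :=
      setIntegral_mono_set hx (ae_of_all _ fun s => sq_nonneg _)
        (HasSubset.Subset.eventuallyLE (Set.Ioi_subset_Ioi hy))
    have hA0 : 0 ≤ ∫ s in Set.Ioi y, Real.exp (-(2*q) * s^2) :=
      integral_nonneg fun s => (Real.exp_pos _).le
    have hB0 : 0 ≤ ∫ s in Set.Ioi y, (Real.exp (q*s^2) * d s)^2 :=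
      integral_nonneg fun s => sq_nonneg _
    have hw2 : (w x y)^2 ≤ (∫ s in Set.Ioi y, Real.exp (-(2*q) * s^2))
        * ∫ s in Set.Ioi y, (Real.exp (q*s^2) * d s)^2 := by
      have h5 : |w x y|^2 ≤ (Real.sqrt (∫ s in Set.Ioi y, Real.exp (-(2*q) * s^2))
          * Real.sqrt (∫ s in Set.Ioi y, (Real.exp (q*s^2) * d s)^2))^2 :=
        pow_le_pow_left₀ (abs_nonneg _) (hD.trans hfg) 2
      rw [mul_pow, Real.sq_sqrt hA0, Real.sq_sqrt hB0, sq_abs] at h5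
      exact h5
    have hE : Real.exp (q*y^2)^2 * Real.exp (-(2*q) * y^2) = 1 := by
      rw [expsq, ← Real.exp_add, show 2*(q*y^2) + -(2*q)*y^2 = 0 by ring, Real.exp_zero]
    calc (Real.exp (q*y^2) * w x y)^2
        = Real.exp (q*y^2)^2 * (w x y)^2 := by rw [mul_pow]
      _ ≤ Real.exp (q*y^2)^2 * ((∫ s in Set.Ioi y, Real.exp (-(2*q) * s^2))
            * ∫ s in Set.Ioi y, (Real.exp (q*s^2) * d s)^2) :=
          mul_le_mul_of_nonneg_left hw2 (sq_nonneg _)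
      _ ≤ Real.exp (q*y^2)^2 * ((Real.exp (-(2*q) * y^2) * (6 * Real.sqrt (1+t)))
            * ∫ s in Set.Ioi y, (Real.exp (q*s^2) * d s)^2) :=
          mul_le_mul_of_nonneg_left (mul_le_mul_of_nonneg_right hA hB0) (sq_nonneg _)
      _ = (Real.exp (q*y^2)^2 * Real.exp (-(2*q) * y^2))
            * (6 * Real.sqrt (1+t) * ∫ s in Set.Ioi y, (Real.exp (q*s^2) * d s)^2) := by
          ring
      _ = 6 * Real.sqrt (1+t) * ∫ s in Set.Ioi y, (Real.exp (q*s^2) * d s)^2 := by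
          rw [hE, one_mul]
      _ ≤ 6 * Real.sqrt (1+t) * ∫ s in Set.Ioi 0, (Real.exp (q*s^2) * d s)^2 :=
          mul_le_mul_of_nonneg_left hB (by positivity)
  -- integrate in x
  have hae : ∀ᵐ x ∂(volume : Measure ℝ),
      IntegrableOn (fun s => (Real.exp (q*s^2) * deriv (w x) s)^2) (Set.Ioi 0) :=
    hint.prod_right_ae
  have hBint : Integrable (fun x => ∫ s in Set.Ioi 0,
      (Real.exp (q*s^2) * deriv (w x) s)^2) (volume : Measure ℝ) :=
    hint.integral_prod_left
  set I2 : ℝ := ∫ p, (Real.exp (q * p.2^2) * deriv (w p.1) p.2)^2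
      ∂((volume : Measure ℝ).prod ((volume : Measure ℝ).restrict (Set.Ioi 0))) with hI2
  have hI2' : (∫ x, ∫ s in Set.Ioi 0, (Real.exp (q*s^2) * deriv (w x) s)^2) = I2 :=
    integral_integral hint
  have hmono : (∫ x, (Real.exp (q*y^2) * w x y)^2)
      ≤ 6 * Real.sqrt (1+t) * I2 := by
    have step := integral_mono_of_nonneg (ae_of_all _ fun x => sq_nonneg _)
      (hBint.const_mul (6 * Real.sqrt (1+t)))
      (by filter_upwards [hae] with x hx; exact key x hx)
    rw [integral_const_mul, hI2'] at step
    exact step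
  have hI20 : 0 ≤ I2 := by
    rw [hI2]; exact integral_nonneg fun p => sq_nonneg _
  have h14 : Real.sqrt (Real.sqrt (1+t)) = (1+t) ^ ((1:ℝ)/4) := by
    rw [Real.sqrt_eq_rpow, Real.sqrt_eq_rpow, ← Real.rpow_mul ht1.le]; norm_num
  calc Real.sqrt (∫ x, (Real.exp (q*y^2) * w x y)^2)
      ≤ Real.sqrt (6 * Real.sqrt (1+t) * I2) := Real.sqrt_le_sqrt hmono
    _ = Real.sqrt 6 * Real.sqrt (Real.sqrt (1+t)) * Real.sqrt I2 := by
        rw [Real.sqrt_mul (by positivity), Real.sqrt_mul (by norm_num)]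
    _ ≤ 6 * (1+t) ^ ((1:ℝ)/4) * Real.sqrt I2 := by
        rw [h14]
        have h6 : Real.sqrt 6 ≤ 6 := by
          nlinarith [Real.sq_sqrt (show (0:ℝ) ≤ 6 by norm_num),
            sq_nonneg (Real.sqrt 6 - 6), Real.sqrt_nonneg 6]
        have hr : 0 ≤ (1+t) ^ ((1:ℝ)/4) := Real.rpow_nonneg ht1.le _
        have hs6 : 0 ≤ Real.sqrt 6 := Real.sqrt_nonneg _
        have hsI : 0 ≤ Real.sqrt I2 := Real.sqrt_nonneg _
        nlinarith [mul_nonneg hr hsI]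
end
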